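/- Linear convergence under the projected PL inequality: Let C be nonempty closed convex, f differentiable with L-Lipschitz gradient, α ∈ (0, 1/L], and suppose f satisfies the projected PL inequality ‖G_α(x)‖² ≥ κ (f(x) - f*) on C for some κ > 0, where f* = min_{x ∈ C} f(x). Then the iterates x_{k+1} = Π_C(x_k - α∇f(x_k)) satisfy f(x_k) - f* ≤ (1 - α(1 - αL/2)κ)^k (f(x_0) - f*). -/

import Mathlib

open scoped RealInnerProductSpace

/-!
Write `y⁺ = Π_C(y - α∇f(y)) = y - α G_α(y)`. The obtuse-angle characterisation of the projection,
tested at `y ∈ C`, gives `‖G_α(y)‖² ≤ ⟪∇f(y), G_α(y)⟫`; plugging this into the descent lemma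
`f(y⁺) ≤ f(y) + ⟪∇f(y), y⁺ - y⟫ + L/2 ‖y⁺ - y‖²` yields the sufficient decrease
`f(y⁺) ≤ f(y) - α(1 - αL/2) ‖G_α(y)‖²`. The projected PL inequality turns this into the
contraction `f(y⁺) - f* ≤ (1 - α(1 - αL/2)κ)(f(y) - f*)`, which iterates along the sequence.
-/

theorem le_geom_of_nonneg {u : ℕ → ℝ} {c : ℝ} (hu : ∀ k, 0 ≤ u k)
    (h : ∀ k, u (k + 1) ≤ c * u k) (n : ℕ) : u n ≤ c ^ n * u 0 := by
  rcases le_or_gt 0 c with hc | hc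
  · exact le_geom hc n fun k _ => h k
  · -- a nonnegative sequence with `u (k + 1) ≤ c * u k` and `c < 0` vanishes
    have hu0 : u 0 = 0 := by nlinarith [h 0, hu 0, hu 1]
    cases n with
    | zero => simp
    | succ n => rw [hu0, mul_zero]; nlinarith [h n, hu n]

section InnerProductSpace

variable {F : Type*} [NormedAddCommGroup F] [InnerProductSpace ℝ F]

theorem real_inner_le_zero_of_forall_norm_sub_le {K : Set F} (hK : Convex ℝ K) {u p : F}
    (hp : p ∈ K) (hmin : ∀ z ∈ K, ‖u - p‖ ≤ ‖u - z‖) : ∀ z ∈ K, ⟪u - p, z - p⟫ ≤ 0 := by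
  have : Nonempty K := ⟨⟨p, hp⟩⟩
  refine (norm_eq_iInf_iff_real_inner_le_zero hK hp).mp (le_antisymm ?_ ?_)
  · exact le_ciInf fun w => hmin w w.2
  · exact ciInf_le ⟨0, Set.forall_mem_range.2 fun _ => norm_nonneg _⟩ (⟨p, hp⟩ : K)

theorem le_add_inner_add_half_mul_norm_sq [CompleteSpace F] {f : F → ℝ} {g : F → F}
    (hf : ∀ x, HasGradientAt f (g x) x) {L : ℝ} (hg : ∀ x y, ‖g x - g y‖ ≤ L * ‖x - y‖)
    (x y : F) : f y ≤ f x + ⟪g x, y - x⟫ + L / 2 * ‖y - x‖ ^ 2 := by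
  set v := y - x
  let φ : ℝ → ℝ := fun t => f (x + t • v) - t * ⟪g x, v⟫ - L / 2 * t ^ 2 * ‖v‖ ^ 2
  have hφ : ∀ t, HasDerivAt φ (⟪g (x + t • v) - g x, v⟫ - L * t * ‖v‖ ^ 2) t := by
    intro t
    have hline : HasDerivAt (fun t : ℝ => f (x + t • v)) ⟪g (x + t • v), v⟫ t := by
      have := (hf (x + t • v)).hasFDerivAt.comp_hasDerivAt t
        (((hasDerivAt_id t).smul_const v).const_add x)
      simp only [id_eq, one_smul, InnerProductSpace.toDual_apply_apply] at this
      exact this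
    refine ((hline.sub ((hasDerivAt_id t).mul_const ⟪g x, v⟫)).sub
      (((hasDerivAt_pow 2 t).const_mul (L / 2)).mul_const (‖v‖ ^ 2))).congr_deriv ?_
    rw [inner_sub_left]; push_cast; ring
  have hφ_nonpos : ∀ t ∈ interior (Set.Ici (0 : ℝ)), deriv φ t ≤ 0 := by
    intro t ht
    rw [interior_Ici] at ht
    rw [(hφ t).deriv, sub_nonpos]
    calc ⟪g (x + t • v) - g x, v⟫ ≤ ‖g (x + t • v) - g x‖ * ‖v‖ := real_inner_le_norm _ _
      _ ≤ L * ‖t • v‖ * ‖v‖ := by gcongr; simpa using hg (x + t • v) x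
      _ = L * t * ‖v‖ ^ 2 := by rw [norm_smul, Real.norm_of_nonneg ht.le]; ring
  have hanti : AntitoneOn φ (Set.Ici 0) :=
    antitoneOn_of_deriv_nonpos (convex_Ici 0) (fun t _ => (hφ t).continuousAt.continuousWithinAt)
      (fun t _ => (hφ t).differentiableAt.differentiableWithinAt) hφ_nonpos
  have h01 : φ 1 ≤ φ 0 := hanti Set.self_mem_Ici (Set.mem_Ici.2 zero_le_one) zero_le_one
  simp only [φ, v, one_smul, add_sub_cancel, zero_smul, add_zero] at h01
  linarith

noncomputable def projGradMap (proj g : F → F) (α : ℝ) (y : F) : F :=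
  α⁻¹ • (y - proj (y - α • g y))

variable {C : Set F} {proj g : F → F} {α : ℝ}

theorem proj_sub_smul_eq_sub_smul_projGradMap (hα : α ≠ 0) (y : F) :
    proj (y - α • g y) = y - α • projGradMap proj g α y := by
  simp [projGradMap, smul_smul, hα]

theorem norm_sq_projGradMap_le_inner (hC : Convex ℝ C)
    (hproj : ∀ y, proj y ∈ C ∧ ∀ z ∈ C, ‖y - proj y‖ ≤ ‖y - z‖) (hα : 0 < α) {y : F}
    (hy : y ∈ C) : ‖projGradMap proj g α y‖ ^ 2 ≤ ⟪g y, projGradMap proj g α y⟫ := by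
  set G := projGradMap proj g α y
  have hvi := real_inner_le_zero_of_forall_norm_sub_le hC (hproj (y - α • g y)).1
    (hproj _).2 y hy
  rw [proj_sub_smul_eq_sub_smul_projGradMap (proj := proj) hα.ne' y, sub_sub_sub_cancel_left,
    sub_sub_cancel, ← smul_sub, real_inner_smul_left, real_inner_smul_right] at hvi
  have : ⟪G - g y, G⟫ ≤ 0 := nonpos_of_mul_nonpos_right (by nlinarith) (by positivity : 0 < α * α)
  rw [inner_sub_left, real_inner_self_eq_norm_sq] at this
  linarith

variable [CompleteSpace F] {f : F → ℝ} {L : ℝ}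

theorem apply_proj_le_sub_mul_norm_sq_projGradMap (hC : Convex ℝ C)
    (hproj : ∀ y, proj y ∈ C ∧ ∀ z ∈ C, ‖y - proj y‖ ≤ ‖y - z‖)
    (hf : ∀ x, HasGradientAt f (g x) x) (hg : ∀ x y, ‖g x - g y‖ ≤ L * ‖x - y‖) (hα : 0 < α)
    {y : F} (hy : y ∈ C) :
    f (proj (y - α • g y)) ≤ f y - α * (1 - α * L / 2) * ‖projGradMap proj g α y‖ ^ 2 := by
  have hdesc := le_add_inner_add_half_mul_norm_sq hf hg y (y - α • projGradMap proj g α y)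
  rw [sub_sub_cancel_left, inner_neg_right, norm_neg, real_inner_smul_right, norm_smul,
    Real.norm_of_nonneg hα.le, ← proj_sub_smul_eq_sub_smul_projGradMap hα.ne'] at hdesc
  nlinarith [mul_le_mul_of_nonneg_left (norm_sq_projGradMap_le_inner (g := g) hC hproj hα hy) hα.le]

theorem apply_proj_sub_le_mul_sub_of_pl (hC : Convex ℝ C)
    (hproj : ∀ y, proj y ∈ C ∧ ∀ z ∈ C, ‖y - proj y‖ ≤ ‖y - z‖)
    (hf : ∀ x, HasGradientAt f (g x) x) (hg : ∀ x y, ‖g x - g y‖ ≤ L * ‖x - y‖) (hα : 0 < α)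
    (hαL : α * L ≤ 2) {fstar κ : ℝ} {y : F} (hy : y ∈ C)
    (hPL : κ * (f y - fstar) ≤ ‖projGradMap proj g α y‖ ^ 2) :
    f (proj (y - α • g y)) - fstar ≤ (1 - α * (1 - α * L / 2) * κ) * (f y - fstar) := by
  have hstep : 0 ≤ α * (1 - α * L / 2) := mul_nonneg hα.le (by linarith)
  nlinarith [apply_proj_le_sub_mul_norm_sq_projGradMap hC hproj hf hg hα hy,
    mul_le_mul_of_nonneg_left hPL hstep]

end InnerProductSpace

theorem linear_convergence_projected_pl_general
    {d : ℕ} (C : Set (EuclideanSpace ℝ (Fin d)))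
    (hconv : Convex ℝ C)
    (proj : EuclideanSpace ℝ (Fin d) → EuclideanSpace ℝ (Fin d))
    (hproj : ∀ y, proj y ∈ C ∧ ∀ z ∈ C, ‖y - proj y‖ ≤ ‖y - z‖)
    (f : EuclideanSpace ℝ (Fin d) → ℝ) (g : EuclideanSpace ℝ (Fin d) → EuclideanSpace ℝ (Fin d))
    (hdiff : ∀ x, HasGradientAt f (g x) x)
    (L : ℝ) (hLip : ∀ x y, ‖g x - g y‖ ≤ L * ‖x - y‖)
    (α : ℝ) (hα : 0 < α) (hαL : α ≤ 1 / L)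
    (fstar : ℝ) (hlb : ∀ y ∈ C, fstar ≤ f y)
    (κ : ℝ)
    (hPL : ∀ y ∈ C, ‖α⁻¹ • (y - proj (y - α • g y))‖ ^ 2 ≥ κ * (f y - fstar))
    (x : ℕ → EuclideanSpace ℝ (Fin d)) (hx0 : x 0 ∈ C)
    (hiter : ∀ k, x (k + 1) = proj (x k - α • g (x k))) :
    ∀ k : ℕ, f (x k) - fstar ≤ (1 - α * (1 - α * L / 2) * κ) ^ k * (f (x 0) - fstar) := by
  have hxC : ∀ k, x k ∈ C
    | 0 => hx0
    | k + 1 => hiter k ▸ (hproj _).1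
  have hL : 0 < L := one_div_pos.mp (hα.trans_le hαL)
  have hαL' : α * L ≤ 2 := by linarith [(le_div_iff₀ hL).mp hαL]
  refine le_geom_of_nonneg (fun k => sub_nonneg.2 (hlb _ (hxC k))) fun k => ?_
  rw [hiter k]
  exact apply_proj_sub_le_mul_sub_of_pl hconv hproj hdiff hLip hα hαL' (hxC k)
    (hPL _ (hxC k))

/-- Linear convergence of projected gradient descent under the projected PL inequality:
if `‖G_α(x)‖² ≥ κ (f x - fstar)` on `C`, then the iterates
`x_{k+1} = Π_C(x_k - α ∇f(x_k))` satisfy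
`f(x_k) - fstar ≤ (1 - α(1 - αL/2)κ)^k (f(x_0) - fstar)`. -/
theorem linear_convergence_projected_pl
    {d : ℕ} (C : Set (EuclideanSpace ℝ (Fin d)))
    (hC : C.Nonempty) (hclosed : IsClosed C) (hconv : Convex ℝ C)
    (proj : EuclideanSpace ℝ (Fin d) → EuclideanSpace ℝ (Fin d))
    (hproj : ∀ y, proj y ∈ C ∧ ∀ z ∈ C, ‖y - proj y‖ ≤ ‖y - z‖)
    (f : EuclideanSpace ℝ (Fin d) → ℝ) (g : EuclideanSpace ℝ (Fin d) → EuclideanSpace ℝ (Fin d))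
    (hdiff : ∀ x, HasGradientAt f (g x) x)
    (L : ℝ) (hL : 0 < L) (hLip : ∀ x y, ‖g x - g y‖ ≤ L * ‖x - y‖)
    (α : ℝ) (hα : 0 < α) (hαL : α ≤ 1 / L)
    (fstar : ℝ) (hlb : ∀ y ∈ C, fstar ≤ f y) (hatt : ∃ y ∈ C, f y = fstar)
    (κ : ℝ) (hκ : 0 < κ)
    (hPL : ∀ y ∈ C, ‖α⁻¹ • (y - proj (y - α • g y))‖ ^ 2 ≥ κ * (f y - fstar))
    (x : ℕ → EuclideanSpace ℝ (Fin d)) (hx0 : x 0 ∈ C)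
    (hiter : ∀ k, x (k + 1) = proj (x k - α • g (x k))) :
    ∀ k : ℕ, f (x k) - fstar ≤ (1 - α * (1 - α * L / 2) * κ) ^ k * (f (x 0) - fstar) :=
  linear_convergence_projected_pl_general C hconv proj hproj f g hdiff L hLip α hα hαL fstar hlb κ
    hPL x hx0 hiter
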